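/- arXiv:2205.05654 — 4 statements merged into one kernel-verified Lean document; each statement's English description precedes it below -/
import Mathlib

section
/- Let X ∈ ℝ^{n×p}, y ∈ ℝ^n, and let β̂ minimize the penalized least-squares objective β ↦ (1/(2n))‖y − Xβ‖² + g(β), where g is convex and minimized at 0. If ŷ = Xβ̂ ≠ 0, then the least-squares scaling factor α̂ = (ŷᵀy)/(ŷᵀŷ) satisfies α̂ ≥ 1. -/
open Matrix

/-- For a minimizer `β̂` of the penalized least-squares objective
`β ↦ (1/(2n))‖y - Xβ‖² + g β` with `g` convex and minimized at `0`,
if `ŷ = Xβ̂ ≠ 0` then `α̂ = (ŷᵀy)/(ŷᵀŷ) ≥ 1`. -/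
theorem alpha_mod_ge_one {n p : ℕ} (hn : 0 < n)
    (X : Matrix (Fin n) (Fin p) ℝ) (y : Fin n → ℝ)
    (g : (Fin p → ℝ) → ℝ)
    (hconv : ConvexOn ℝ Set.univ g)
    (hmin : ∀ β : Fin p → ℝ, g 0 ≤ g β)
    (βhat : Fin p → ℝ)
    (hopt : ∀ β : Fin p → ℝ,
      (1 / (2 * (n : ℝ))) * ((y - X.mulVec βhat) ⬝ᵥ (y - X.mulVec βhat)) + g βhat ≤
      (1 / (2 * (n : ℝ))) * ((y - X.mulVec β) ⬝ᵥ (y - X.mulVec β)) + g β)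
    (hy : X.mulVec βhat ≠ 0) :
    1 ≤ (X.mulVec βhat ⬝ᵥ y) / (X.mulVec βhat ⬝ᵥ X.mulVec βhat) := by
  set v := X.mulVec βhat with hv
  have hS : 0 < v ⬝ᵥ v := by
    have hnn : 0 ≤ v ⬝ᵥ v := Finset.sum_nonneg fun i _ => mul_self_nonneg _
    rcases hnn.lt_or_eq with h | h
    · exact h
    · exact absurd ((dotProduct_self_eq_zero).mp h.symm) hy
  set S := v ⬝ᵥ v with hSdef
  set I := v ⬝ᵥ y with hIdef
  have expand : ∀ t : ℝ, (y - t • v) ⬝ᵥ (y - t • v)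
      = y ⬝ᵥ y - 2 * t * I + t ^ 2 * S := by
    intro t
    simp only [hIdef, hSdef, dotProduct_sub, sub_dotProduct, dotProduct_smul,
      smul_dotProduct, smul_eq_mul, dotProduct_comm y v]
    ring
  have key : ∀ ε : ℝ, 0 < ε → ε ≤ 1 → (2 - ε) * S ≤ 2 * I := by
    intro ε hε hε1
    have hg : g ((1 - ε) • βhat) ≤ g βhat := by
      have h := hconv.2 (Set.mem_univ βhat) (Set.mem_univ (0 : Fin p → ℝ))
        (by linarith : (0:ℝ) ≤ 1 - ε) (le_of_lt hε) (by ring)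
      simp only [smul_zero, add_zero, smul_eq_mul] at h
      have h0 := hmin βhat
      nlinarith [h, h0]
    have hc : 0 < 1 / (2 * (n : ℝ)) := by positivity
    have hQ : (y - v) ⬝ᵥ (y - v) ≤ (y - (1 - ε) • v) ⬝ᵥ (y - (1 - ε) • v) := by
      have h := hopt ((1 - ε) • βhat)
      rw [Matrix.mulVec_smul] at h
      have h2 : (1 / (2 * (n : ℝ))) * ((y - v) ⬝ᵥ (y - v)) ≤
          (1 / (2 * (n : ℝ))) * ((y - (1 - ε) • v) ⬝ᵥ (y - (1 - ε) • v)) := by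
        have := hopt ((1 - ε) • βhat)
        rw [Matrix.mulVec_smul] at this
        linarith [hg, this]
      exact le_of_mul_le_mul_left h2 hc
    have e1 : (y - v) ⬝ᵥ (y - v) = y ⬝ᵥ y - 2 * 1 * I + 1 ^ 2 * S := by
      have := expand 1
      simpa using this
    have e2 := expand (1 - ε)
    rw [e1, e2] at hQ
    nlinarith [hQ, hε]
  have hSI : S ≤ I := by
    by_contra hlt
    push_neg at hlt
    set ε := min 1 ((S - I) / S) with hεdef
    have hε : 0 < ε := lt_min one_pos (div_pos (by linarith) hS)
    have hε1 : ε ≤ 1 := min_le_left _ _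
    have hk := key ε hε hε1
    have hεS : ε * S ≤ S - I := by
      have : ε ≤ (S - I) / S := min_le_right _ _
      calc ε * S ≤ ((S - I) / S) * S := by nlinarith [hS]
        _ = S - I := by field_simp
    nlinarith [hk, hεS, hlt]
  exact (one_le_div hS).mpr hSI
end

section
/- Suppose β̂ = ‖β̂‖·ξ* where ξ* = β*/‖β*‖ is the unit direction of β* ≠ 0, and the response satisfies y = Xβ* + ε. If Xξ* ≠ 0, then the α-modified estimate satisfies α̂ β̂ = β* + ((ξ*ᵀXᵀε)/(ξ*ᵀXᵀXξ*)) ξ*, where α̂ = ((Xβ̂)ᵀy)/((Xβ̂)ᵀ(Xβ̂)). In particular, if ε has mean zero then α̂β̂ has expectation β*. -/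
open Matrix MeasureTheory

lemma dot_self_pos {m : ℕ} {v : Fin m → ℝ} (hv : v ≠ 0) : 0 < v ⬝ᵥ v := by
  have h0 : v ⬝ᵥ v ≠ 0 := fun h => hv (dotProduct_self_eq_zero.mp h)
  have h1 : 0 ≤ v ⬝ᵥ v := Finset.sum_nonneg fun i _ => mul_self_nonneg _
  exact lt_of_le_of_ne h1 (Ne.symm h0)

/-- If `β̂` recovers the direction `ξ* = β*/‖β*‖` of `β* ≠ 0` (i.e. `β̂ = c·ξ*`, `c > 0`)
and `y = Xβ* + ε`, then the α-modified estimate satisfies the deterministic identity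
`α̂ β̂ = β* + ((ξ*ᵀXᵀε)/(ξ*ᵀXᵀXξ*)) ξ*`; in particular, if `ε` has mean zero
then `α̂ β̂` has expectation `β*`. -/
theorem alpha_mod_unbiased {n p : ℕ}
    (X : Matrix (Fin n) (Fin p) ℝ) (βs : Fin p → ℝ) (hβs : βs ≠ 0)
    (ξ : Fin p → ℝ) (hξ : ξ = (Real.sqrt (βs ⬝ᵥ βs))⁻¹ • βs)
    (hXξ : X.mulVec ξ ≠ 0)
    {Ω : Type*} [MeasurableSpace Ω] (μ : Measure Ω) [IsProbabilityMeasure μ]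
    (ε : Ω → Fin n → ℝ) (c : Ω → ℝ) (hc : ∀ ω, 0 < c ω)
    (βhat : Ω → Fin p → ℝ) (hβhat : ∀ ω, βhat ω = c ω • ξ)
    (y : Ω → Fin n → ℝ) (hy : ∀ ω, y ω = X.mulVec βs + ε ω)
    (αhat : Ω → ℝ)
    (hα : ∀ ω, αhat ω =
      (X.mulVec (βhat ω) ⬝ᵥ y ω) / (X.mulVec (βhat ω) ⬝ᵥ X.mulVec (βhat ω)))
    (hint : ∀ i, Integrable (fun ω => ε ω i) μ)
    (hmean : ∀ i, ∫ ω, ε ω i ∂μ = 0) :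
    (∀ ω, αhat ω • βhat ω =
      βs + ((X.mulVec ξ ⬝ᵥ ε ω) / (X.mulVec ξ ⬝ᵥ X.mulVec ξ)) • ξ) ∧
    (∀ j, ∫ ω, (αhat ω • βhat ω) j ∂μ = βs j) := by
  set s := Real.sqrt (βs ⬝ᵥ βs) with hs
  have hdot : 0 < βs ⬝ᵥ βs := dot_self_pos hβs
  have hs0 : 0 < s := Real.sqrt_pos.mpr hdot
  have hβξ : βs = s • ξ := by
    rw [hξ, smul_smul, mul_inv_cancel₀ hs0.ne', one_smul]
  set q := X.mulVec ξ ⬝ᵥ X.mulVec ξ with hq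
  have hq0 : 0 < q := dot_self_pos hXξ
  have key : ∀ ω, αhat ω • βhat ω =
      βs + ((X.mulVec ξ ⬝ᵥ ε ω) / q) • ξ := by
    intro ω
    have hcne := (hc ω).ne'
    have hXβh : X.mulVec (βhat ω) = c ω • X.mulVec ξ := by
      rw [hβhat, mulVec_smul]
    have hXβs : X.mulVec βs = s • X.mulVec ξ := by
      rw [hβξ, mulVec_smul]
    have hαω : αhat ω = (X.mulVec ξ ⬝ᵥ y ω) / (c ω * q) := by
      rw [hα, hXβh, smul_dotProduct, smul_dotProduct, dotProduct_smul,
        smul_eq_mul, smul_eq_mul, smul_eq_mul]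
      rw [mul_div_mul_left _ _ hcne]
    have hyω : X.mulVec ξ ⬝ᵥ y ω = s * q + X.mulVec ξ ⬝ᵥ ε ω := by
      rw [hy, dotProduct_add, hXβs, dotProduct_smul, smul_eq_mul]
    rw [hβhat, hαω, hyω, hβξ, smul_smul]
    rw [show (s * q + X.mulVec ξ ⬝ᵥ ε ω) / (c ω * q) * c ω
        = s + (X.mulVec ξ ⬝ᵥ ε ω) / q by field_simp]
    exact add_smul _ _ _
  refine ⟨key, fun j => ?_⟩
  have : ∀ ω, (αhat ω • βhat ω) j
      = βs j + ∑ i, (X.mulVec ξ i * ε ω i) * (ξ j / q) := by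
    intro ω
    rw [key ω]
    simp only [Pi.add_apply, Pi.smul_apply, smul_eq_mul, dotProduct]
    rw [div_mul_eq_mul_div, Finset.sum_mul, Finset.sum_div]
    exact congrArg _ (Finset.sum_congr rfl fun i _ => by ring)
  simp_rw [this]
  have hintsum : Integrable (fun ω => ∑ i, (X.mulVec ξ i * ε ω i) * (ξ j / q)) μ :=
    integrable_finset_sum _ fun i _ =>
      (((hint i).const_mul (X.mulVec ξ i)).mul_const _)
  rw [integral_add (integrable_const _) hintsum, integral_const,
    integral_finset_sum _ fun i _ =>
      (((hint i).const_mul (X.mulVec ξ i)).mul_const _)]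
  have : ∀ i : Fin n, ∫ ω, (X.mulVec ξ i * ε ω i) * (ξ j / q) ∂μ = 0 := by
    intro i
    rw [integral_mul_const, integral_const_mul, hmean, mul_zero, zero_mul]
  simp [this]
end

section
/- In the setting of independent mean-zero errors with variance σ², suppose the estimate β̂ (possibly random via ε) satisfies β̂ = ‖β̂‖ξ* with ξ* = β*/α*, α* = ‖β*‖. Then the expected modified squared prediction error E[(ε₀ − x_kᵀξ*·(ξ*ᵀXᵀε)/(ξ*ᵀXᵀXξ*))²] is less than or equal to the expected unmodified squared prediction error E[(ε₀ − x_kᵀξ*(‖β̂‖ − α*))²] if and only if σ²/(ξ*ᵀXᵀXξ*) ≤ E[(‖β̂‖ − α*)²] (when x_kᵀξ* ≠ 0), equivalently α*²/E[(‖β̂‖−α*)²] ≤ β*ᵀXᵀXβ*/σ². -/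
open Matrix MeasureTheory ProbabilityTheory

/-! Since `ε₀` is centred and independent of `(ε, c)`, the cross term of either squared error
vanishes, so each expected error is `σ² + (x_kᵀξ*)²` times the second moment of the deviation
it uses. For the modified prediction that moment is `E[(vᵀε)²]/Q² = σ²/Q` with `v = Xξ*`,
`Q = ‖v‖²`, which gives the first equivalence; the second is arithmetic, using `Xβ* = α* v`. -/

section

variable {Ω : Type*} [MeasurableSpace Ω] {μ : Measure Ω}

lemma integral_sub_mul_sq_of_indepFun {X Y : Ω → ℝ} (hXY : IndepFun X Y μ)
    (hX : Integrable X μ) (hX2 : Integrable (fun ω => X ω ^ 2) μ) (hX0 : ∫ ω, X ω ∂μ = 0)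
    (hY : Integrable Y μ) (hY2 : Integrable (fun ω => Y ω ^ 2) μ) (a : ℝ) :
    ∫ ω, (X ω - a * Y ω) ^ 2 ∂μ = ∫ ω, X ω ^ 2 ∂μ + a ^ 2 * ∫ ω, Y ω ^ 2 ∂μ := by
  have hcross : ∫ ω, X ω * Y ω ∂μ = 0 := by
    change μ[X * Y] = 0
    rw [hXY.integral_mul_eq_mul_integral hX.1 hY.1, hX0, zero_mul]
  have hXY1 : Integrable (fun ω => 2 * a * (X ω * Y ω)) μ :=
    (hXY.integrable_mul hX hY).const_mul _
  calc ∫ ω, (X ω - a * Y ω) ^ 2 ∂μ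
      = ∫ ω, (X ω ^ 2 - 2 * a * (X ω * Y ω) + a ^ 2 * Y ω ^ 2) ∂μ := by
        congr 1; ext ω; ring
    _ = ∫ ω, X ω ^ 2 ∂μ + a ^ 2 * ∫ ω, Y ω ^ 2 ∂μ := by
        rw [integral_add (f := fun ω => X ω ^ 2 - 2 * a * (X ω * Y ω)) (hX2.sub hXY1)
          (hY2.const_mul _), integral_sub hX2 hXY1,
          integral_const_mul, integral_const_mul, hcross, mul_zero, sub_zero]

variable {ι : Type*} [Fintype ι] {ε : Ω → ι → ℝ}

lemma integrable_dotProduct (v : ι → ℝ) (hε : ∀ i, Integrable (fun ω => ε ω i) μ) :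
    Integrable (fun ω => v ⬝ᵥ ε ω) μ :=
  integrable_finsetSum _ fun i _ => (hε i).const_mul _

lemma dotProduct_sq_eq_sum_sum (v w : ι → ℝ) :
    (v ⬝ᵥ w) ^ 2 = ∑ i, ∑ j, v i * v j * (w i * w j) := by
  simp only [dotProduct, sq, Finset.sum_mul_sum]
  exact Finset.sum_congr rfl fun i _ => Finset.sum_congr rfl fun j _ => by ring

lemma integrable_dotProduct_sq (v : ι → ℝ)
    (hε : ∀ i j, Integrable (fun ω => ε ω i * ε ω j) μ) :
    Integrable (fun ω => (v ⬝ᵥ ε ω) ^ 2) μ := by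
  simp only [dotProduct_sq_eq_sum_sum]
  exact integrable_finsetSum _ fun i _ =>
    integrable_finsetSum _ fun j _ => (hε i j).const_mul _

lemma integral_dotProduct_sq (v : ι → ℝ) {S : Matrix ι ι ℝ}
    (hε : ∀ i j, Integrable (fun ω => ε ω i * ε ω j) μ)
    (hS : ∀ i j, ∫ ω, ε ω i * ε ω j ∂μ = S i j) :
    ∫ ω, (v ⬝ᵥ ε ω) ^ 2 ∂μ = v ⬝ᵥ S *ᵥ v := by
  simp only [dotProduct_sq_eq_sum_sum]
  rw [integral_finsetSum _ fun i _ =>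
    integrable_finsetSum _ fun j _ => (hε i j).const_mul _]
  simp only [integral_finsetSum _ fun j _ => (hε _ j).const_mul _, integral_const_mul, hS,
    dotProduct, mulVec, Finset.mul_sum]
  exact Finset.sum_congr rfl fun i _ => Finset.sum_congr rfl fun j _ => by ring

lemma integral_dotProduct_sq_of_isotropic [DecidableEq ι] (v : ι → ℝ) {σ : ℝ}
    (hε : ∀ i j, Integrable (fun ω => ε ω i * ε ω j) μ)
    (hcov : ∀ i j, ∫ ω, ε ω i * ε ω j ∂μ = if i = j then σ ^ 2 else 0) :
    ∫ ω, (v ⬝ᵥ ε ω) ^ 2 ∂μ = σ ^ 2 * (v ⬝ᵥ v) := by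
  have hS : ∀ i j, ∫ ω, ε ω i * ε ω j ∂μ = (σ ^ 2 • 1 : Matrix ι ι ℝ) i j := by
    simp [hcov, Matrix.one_apply]
  rw [integral_dotProduct_sq v hε hS, smul_mulVec, one_mulVec, dotProduct_smul, smul_eq_mul]

end

lemma mulVec_smul_dotProduct_self {m n : Type*} [Fintype m] [Fintype n]
    (A : Matrix m n ℝ) (a : ℝ) (x : n → ℝ) :
    A *ᵥ (a • x) ⬝ᵥ A *ᵥ (a • x) = a ^ 2 * (A *ᵥ x ⬝ᵥ A *ᵥ x) := by
  rw [mulVec_smul, smul_dotProduct, dotProduct_smul, smul_eq_mul, smul_eq_mul, ← mul_assoc, sq]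

lemma div_le_iff_div_le_mul_div {s q e a : ℝ} (hs : 0 < s) (hq : 0 < q) (he : 0 < e)
    (ha : 0 < a) : s / q ≤ e ↔ a / e ≤ a * q / s := by
  rw [div_le_iff₀ hq, div_le_div_iff₀ he hs, mul_assoc, mul_le_mul_iff_right₀ ha, mul_comm q]

theorem mod_ape_le_ape_iff_general {n p : ℕ}
    (X : Matrix (Fin n) (Fin p) ℝ) (βs : Fin p → ℝ) (hβs : βs ≠ 0)
    (αs : ℝ) (hαs : αs = Real.sqrt (βs ⬝ᵥ βs))
    (ξ : Fin p → ℝ) (hξ : ξ = αs⁻¹ • βs) (hXξ : X.mulVec ξ ≠ 0)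
    (xk : Fin p → ℝ) (hxk : xk ⬝ᵥ ξ ≠ 0)
    (σ : ℝ) (hσ : 0 < σ)
    {Ω : Type*} [MeasurableSpace Ω] (μ : Measure Ω) [IsProbabilityMeasure μ]
    (ε : Ω → Fin n → ℝ) (ε₀ : Ω → ℝ) (c : Ω → ℝ)
    (hmeasc : Measurable c)
    (hint : ∀ i, Integrable (fun ω => ε ω i) μ)
    (hint2 : ∀ i j, Integrable (fun ω => ε ω i * ε ω j) μ)
    (hcov : ∀ i j, ∫ ω, ε ω i * ε ω j ∂μ = if i = j then σ ^ 2 else 0)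
    (hint₀ : Integrable ε₀ μ) (hint₀2 : Integrable (fun ω => ε₀ ω ^ 2) μ)
    (hmean₀ : ∫ ω, ε₀ ω ∂μ = 0) (hvar₀ : ∫ ω, ε₀ ω ^ 2 ∂μ = σ ^ 2)
    (hindep : IndepFun ε₀ (fun ω => (ε ω, c ω)) μ)
    (hintc : Integrable (fun ω => (c ω - αs) ^ 2) μ)
    (hEpos : 0 < ∫ ω, (c ω - αs) ^ 2 ∂μ) :
    ((∫ ω, (ε₀ ω - (xk ⬝ᵥ ξ) *
        ((X.mulVec ξ ⬝ᵥ ε ω) / (X.mulVec ξ ⬝ᵥ X.mulVec ξ))) ^ 2 ∂μ ≤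
      ∫ ω, (ε₀ ω - (xk ⬝ᵥ ξ) * (c ω - αs)) ^ 2 ∂μ) ↔
      σ ^ 2 / (X.mulVec ξ ⬝ᵥ X.mulVec ξ) ≤ ∫ ω, (c ω - αs) ^ 2 ∂μ) ∧
    ((σ ^ 2 / (X.mulVec ξ ⬝ᵥ X.mulVec ξ) ≤ ∫ ω, (c ω - αs) ^ 2 ∂μ) ↔
      αs ^ 2 / (∫ ω, (c ω - αs) ^ 2 ∂μ) ≤
        (X.mulVec βs ⬝ᵥ X.mulVec βs) / σ ^ 2) := by
  set v := X *ᵥ ξ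
  set Q := v ⬝ᵥ v
  have hQ : 0 < Q := dotProduct_self_star_pos_iff.mpr hXξ
  have hαs_pos : 0 < αs := hαs ▸ Real.sqrt_pos.mpr (dotProduct_self_star_pos_iff.mpr hβs)
  have hmod : ∫ ω, (ε₀ ω - (xk ⬝ᵥ ξ) * ((v ⬝ᵥ ε ω) / Q)) ^ 2 ∂μ
      = σ ^ 2 + (xk ⬝ᵥ ξ) ^ 2 * (σ ^ 2 / Q) := by
    have hind : IndepFun ε₀ (fun ω => (v ⬝ᵥ ε ω) / Q) μ :=
      hindep.comp measurable_id
        (by fun_prop : Continuous fun z : (Fin n → ℝ) × ℝ => (v ⬝ᵥ z.1) / Q).measurable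
    have hsq : Integrable (fun ω => ((v ⬝ᵥ ε ω) / Q) ^ 2) μ := by
      simpa only [div_pow] using (integrable_dotProduct_sq v hint2).div_const (Q ^ 2)
    rw [integral_sub_mul_sq_of_indepFun hind hint₀ hint₀2 hmean₀
      ((integrable_dotProduct v hint).div_const Q) hsq, hvar₀]
    simp only [div_pow, integral_div, integral_dotProduct_sq_of_isotropic v hint2 hcov]
    change σ ^ 2 + _ * (σ ^ 2 * Q / Q ^ 2) = _
    field_simp
  have hun : ∫ ω, (ε₀ ω - (xk ⬝ᵥ ξ) * (c ω - αs)) ^ 2 ∂μ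
      = σ ^ 2 + (xk ⬝ᵥ ξ) ^ 2 * ∫ ω, (c ω - αs) ^ 2 ∂μ := by
    have hc : MemLp (fun ω => c ω - αs) 2 μ :=
      (memLp_two_iff_integrable_sq (hmeasc.sub_const αs).aestronglyMeasurable).mpr hintc
    have hind : IndepFun ε₀ (fun ω => c ω - αs) μ :=
      hindep.comp measurable_id (measurable_snd.sub_const αs)
    rw [integral_sub_mul_sq_of_indepFun hind hint₀ hint₀2 hmean₀
      (hc.integrable one_le_two) hintc, hvar₀]
  have hβs_eq : βs = αs • ξ := by rw [hξ, smul_smul, mul_inv_cancel₀ hαs_pos.ne', one_smul]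
  refine ⟨?_, ?_⟩
  · rw [hmod, hun, add_le_add_iff_left, mul_le_mul_iff_right₀ (by positivity)]
  · rw [hβs_eq, mulVec_smul_dotProduct_self]
    exact div_le_iff_div_le_mul_div (by positivity) hQ hEpos (by positivity)

/-- With independent mean-zero variance-`σ²` errors and `β̂ = ‖β̂‖ξ*`, `ξ* = β*/α*`,
the expected modified squared prediction error is `≤` the expected unmodified one
iff `σ²/(ξ*ᵀXᵀXξ*) ≤ E[(‖β̂‖ − α*)²]`, equivalently
`α*²/E[(‖β̂‖−α*)²] ≤ β*ᵀXᵀXβ*/σ²`. -/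
theorem mod_ape_le_ape_iff {n p : ℕ}
    (X : Matrix (Fin n) (Fin p) ℝ) (βs : Fin p → ℝ) (hβs : βs ≠ 0)
    (αs : ℝ) (hαs : αs = Real.sqrt (βs ⬝ᵥ βs))
    (ξ : Fin p → ℝ) (hξ : ξ = αs⁻¹ • βs) (hXξ : X.mulVec ξ ≠ 0)
    (xk : Fin p → ℝ) (hxk : xk ⬝ᵥ ξ ≠ 0)
    (σ : ℝ) (hσ : 0 < σ)
    {Ω : Type*} [MeasurableSpace Ω] (μ : Measure Ω) [IsProbabilityMeasure μ]
    (ε : Ω → Fin n → ℝ) (ε₀ : Ω → ℝ) (c : Ω → ℝ)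
    (hmeas : Measurable ε) (hmeas₀ : Measurable ε₀) (hmeasc : Measurable c)
    (hint : ∀ i, Integrable (fun ω => ε ω i) μ)
    (hint2 : ∀ i j, Integrable (fun ω => ε ω i * ε ω j) μ)
    (hmean : ∀ i, ∫ ω, ε ω i ∂μ = 0)
    (hcov : ∀ i j, ∫ ω, ε ω i * ε ω j ∂μ = if i = j then σ ^ 2 else 0)
    (hint₀ : Integrable ε₀ μ) (hint₀2 : Integrable (fun ω => ε₀ ω ^ 2) μ)
    (hmean₀ : ∫ ω, ε₀ ω ∂μ = 0) (hvar₀ : ∫ ω, ε₀ ω ^ 2 ∂μ = σ ^ 2)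
    (hindep : IndepFun ε₀ (fun ω => (ε ω, c ω)) μ)
    (hintc : Integrable (fun ω => (c ω - αs) ^ 2) μ)
    (hEpos : 0 < ∫ ω, (c ω - αs) ^ 2 ∂μ)
    (hintPE : Integrable (fun ω => (ε₀ ω - (xk ⬝ᵥ ξ) * (c ω - αs)) ^ 2) μ)
    (hintMod : Integrable (fun ω =>
      (ε₀ ω - (xk ⬝ᵥ ξ) * ((X.mulVec ξ ⬝ᵥ ε ω) / (X.mulVec ξ ⬝ᵥ X.mulVec ξ))) ^ 2) μ) :
    ((∫ ω, (ε₀ ω - (xk ⬝ᵥ ξ) *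
        ((X.mulVec ξ ⬝ᵥ ε ω) / (X.mulVec ξ ⬝ᵥ X.mulVec ξ))) ^ 2 ∂μ ≤
      ∫ ω, (ε₀ ω - (xk ⬝ᵥ ξ) * (c ω - αs)) ^ 2 ∂μ) ↔
      σ ^ 2 / (X.mulVec ξ ⬝ᵥ X.mulVec ξ) ≤ ∫ ω, (c ω - αs) ^ 2 ∂μ) ∧
    ((σ ^ 2 / (X.mulVec ξ ⬝ᵥ X.mulVec ξ) ≤ ∫ ω, (c ω - αs) ^ 2 ∂μ) ↔
      αs ^ 2 / (∫ ω, (c ω - αs) ^ 2 ∂μ) ≤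
        (X.mulVec βs ⬝ᵥ X.mulVec βs) / σ ^ 2) :=
  mod_ape_le_ape_iff_general X βs hβs αs hαs ξ hξ hXξ xk hxk σ hσ μ ε ε₀ c hmeasc hint hint2 hcov
    hint₀ hint₀2 hmean₀ hvar₀ hindep hintc hEpos
end

section
/- Fix λ > 0 and nonnegative constants u = Σ_{j≠j*} d_j and v = Σ_{j≠j*} d_j² with v > 0. Define for x > λ the function f(x) = (λux − λ(v + λu))/((x−λ)² + v). Then f attains its maximum on (λ, ∞) at x* = (uλ + v + √(u²v + v²))/u (when u > 0), and the maximum value equals (λ/2)(√(u²/v + 1) − 1). -/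
/-!
Writing `t = x - λ`, one has `f x = λ (u t - v) / (t² + v)`. With `s = √(u²v + v²)` the identity
`u² ((s - v)(t² + v) - 2v (u t - v)) = (s - v)(u t - (v + s))²` shows that
`(u t - v) / (t² + v) ≤ (s - v) / (2v)` for every real `t`, with equality exactly at
`t = (v + s) / u`, i.e. at `x = x*`. Finally `(s - v) / (2v) = (√(u²/v + 1) - 1) / 2`.
-/

open Real Set

section RationalBound

variable {u v s : ℝ}

theorem sq_mul_quadratic_gap_eq (hs : s ^ 2 = u ^ 2 * v + v ^ 2) (t : ℝ) :
    u ^ 2 * ((s - v) * (t ^ 2 + v) - 2 * v * (u * t - v)) = (s - v) * (u * t - (v + s)) ^ 2 := by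
  linear_combination (2 * u * t - (s + v)) * hs

theorem div_sq_add_le (hu : u ≠ 0) (hv : 0 < v) (hs : s ^ 2 = u ^ 2 * v + v ^ 2) (hvs : v ≤ s)
    (t : ℝ) : (u * t - v) / (t ^ 2 + v) ≤ (s - v) / (2 * v) := by
  rw [div_le_div_iff₀ (by positivity) (by positivity)]
  have hgap : 0 ≤ u ^ 2 * ((s - v) * (t ^ 2 + v) - 2 * v * (u * t - v)) := by
    rw [sq_mul_quadratic_gap_eq hs t]
    exact mul_nonneg (sub_nonneg.2 hvs) (sq_nonneg _)
  have := nonneg_of_mul_nonneg_right hgap (by positivity)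
  linarith

theorem div_sq_add_eq_at_peak (hu : u ≠ 0) (hv : 0 < v) (hs : s ^ 2 = u ^ 2 * v + v ^ 2) :
    (u * ((v + s) / u) - v) / (((v + s) / u) ^ 2 + v) = (s - v) / (2 * v) := by
  have hgap := sq_mul_quadratic_gap_eq hs ((v + s) / u)
  rw [mul_div_cancel₀ _ hu, sub_self, zero_pow two_ne_zero, mul_zero] at hgap
  have hzero := (mul_eq_zero.1 hgap).resolve_left (pow_ne_zero 2 hu)
  rw [mul_div_cancel₀ _ hu, div_eq_div_iff (by positivity) (by positivity)]
  linarith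

end RationalBound

theorem sqrt_sq_div_add_one {u v : ℝ} (hv : 0 < v) :
    √(u ^ 2 / v + 1) = √(u ^ 2 * v + v ^ 2) / v := by
  rw [show u ^ 2 / v + 1 = (u ^ 2 * v + v ^ 2) / v ^ 2 by field_simp,
    sqrt_div' _ (sq_nonneg v), sqrt_sq hv.le]

/-- The function `f(x) = (λux − λ(v + λu))/((x−λ)² + v)` attains its maximum on
`(λ, ∞)` at `x* = (uλ + v + √(u²v + v²))/u`, and the maximum value equals
`(λ/2)(√(u²/v + 1) − 1)`. -/
theorem orth_lasso_deviation_max (lam u v : ℝ) (hlam : 0 < lam)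
    (hu : 0 < u) (hv : 0 < v)
    (f : ℝ → ℝ)
    (hf : ∀ x, f x = (lam * u * x - lam * (v + lam * u)) / ((x - lam) ^ 2 + v))
    (xstar : ℝ)
    (hx : xstar = (u * lam + v + Real.sqrt (u ^ 2 * v + v ^ 2)) / u) :
    xstar ∈ Set.Ioi lam ∧ IsMaxOn f (Set.Ioi lam) xstar ∧
      f xstar = (lam / 2) * (Real.sqrt (u ^ 2 / v + 1) - 1) := by
  set s := √(u ^ 2 * v + v ^ 2)
  have hs : s ^ 2 = u ^ 2 * v + v ^ 2 := sq_sqrt (by positivity)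
  have hvs : v < s := lt_sqrt hv.le |>.2 (by have := mul_pos (pow_pos hu 2) hv; linarith)
  have hf' : ∀ x, f x = lam * ((u * (x - lam) - v) / ((x - lam) ^ 2 + v)) := fun x => by
    rw [hf, ← mul_div_assoc]; ring_nf
  have hxstar : xstar - lam = (v + s) / u := by rw [hx]; field_simp; ring
  have hpeak : f xstar = lam * ((s - v) / (2 * v)) := by
    rw [hf', hxstar, div_sq_add_eq_at_peak hu.ne' hv hs]
  refine ⟨?_, fun x _ => ?_, ?_⟩
  · have : 0 < (v + s) / u := by positivity
    exact sub_pos.1 (hxstar ▸ this)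
  · change f x ≤ f xstar
    rw [hpeak, hf']
    exact mul_le_mul_of_nonneg_left (div_sq_add_le hu.ne' hv hs hvs.le _) hlam.le
  · rw [hpeak, sqrt_sq_div_add_one hv, div_sub_one hv.ne']
    ring
end
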